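/- Let m ≥ 1 and let g : ℂ^m → ℂ be any entire function depending only on the differences z₂-z₁, …, z_m-z_{m-1}. Then f(z) = 1 - (-(z₁+⋯+z_m)/(2m) + g(z))² satisfies (∑_{j=1}^m ∂f/∂z_j(z))² + f(z) = 1 for all z ∈ ℂ^m. -/

import Mathlib

open Finset

theorem sum_fderiv_apply_pi_single {𝕜 ι F : Type*} [NontriviallyNormedField 𝕜] [Fintype ι]
    [DecidableEq ι] [NormedAddCommGroup F] [NormedSpace 𝕜 F] (f : (ι → 𝕜) → F) (z : ι → 𝕜) :
    ∑ j, fderiv 𝕜 f z (Pi.single j 1) = fderiv 𝕜 f z (fun _ => 1) := by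
  rw [← map_sum, Finset.univ_sum_single]

theorem apply_add_const_of_eq_comp_sub {α β : Type*} [AddCommGroup α] {m : ℕ}
    {g : (Fin m → α) → β} {G : (Fin (m - 1) → α) → β}
    (hgG : ∀ z : Fin m → α,
      g z = G (fun i : Fin (m - 1) =>
        z ⟨i.val + 1, by have := i.isLt; omega⟩ - z ⟨i.val, by have := i.isLt; omega⟩))
    (z : Fin m → α) (c : α) : g (z + fun _ => c) = g z := by
  simp only [hgG, Pi.add_apply, add_sub_add_right_eq_sub]

theorem stmt16
    (m : ℕ) (hm : 1 ≤ m)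
    (g : (Fin m → ℂ) → ℂ) (hg : Differentiable ℂ g)
    (G : (Fin (m - 1) → ℂ) → ℂ)
    (hgG : ∀ z : Fin m → ℂ,
      g z = G (fun i : Fin (m - 1) =>
        z ⟨i.val + 1, by have := i.isLt; omega⟩ - z ⟨i.val, by have := i.isLt; omega⟩))
    (f : (Fin m → ℂ) → ℂ)
    (hf : ∀ z : Fin m → ℂ, f z = 1 - (-(∑ j, z j) / (2 * m) + g z) ^ 2) :
    ∀ z : Fin m → ℂ,
      (∑ j : Fin m, fderiv ℂ f z (Pi.single j 1)) ^ 2 + f z = 1 := by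
  intro z
  have hm0 : (m : ℂ) ≠ 0 := by exact_mod_cast (show m ≠ 0 by omega)
  set w := -(∑ j, z j) / (2 * m) + g z
  have hf_diff : Differentiable ℂ f := by
    rw [funext hf]
    fun_prop
  -- moving along the diagonal leaves `g` unchanged and shifts the linear term by `-t/2`
  have hline : (fun t : ℂ => f (z + t • fun _ => 1)) = fun t => 1 - (w - t / 2) ^ 2 := by
    funext t
    have hdiag : (z + t • fun _ => (1 : ℂ)) = z + fun _ => t := by
      ext; simp
    rw [hdiag, hf, apply_add_const_of_eq_comp_sub hgG]
    simp only [Pi.add_apply, sum_add_distrib, sum_const, card_univ, Fintype.card_fin,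
      nsmul_eq_mul, w]
    field_simp
    ring
  have hderiv : deriv (fun t : ℂ => 1 - (w - t / 2) ^ 2) 0 = w := by
    simp only [differentiableAt_const, deriv_const_sub', DifferentiableAt.fun_sub_iff_right,
      differentiableAt_fun_id, DifferentiableAt.div_const, deriv_fun_pow, Nat.cast_ofNat,
      zero_div, sub_zero, Nat.add_one_sub_one, pow_one, deriv_fun_sub, deriv_const',
      deriv_div_const, deriv_id'', one_div, zero_sub, mul_neg, neg_neg]
    ring
  rw [sum_fderiv_apply_pi_single, ← (hf_diff z).lineDeriv_eq_fderiv, lineDeriv, hline,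
    hderiv, hf]
  ring
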